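/- arXiv:1510.05134 — 9 statements merged into one kernel-verified Lean document; each statement's English description precedes it below -/
import Mathlib

section
/- Let P ∈ {+,-}^t be a pattern with s_+(P) ≠ s_-(P), say |s_+(P) - s_-(P)| = m > 0. Then at least one of the two families B₁ = {A ⊆ [n] : |A| mod 2m ∈ [0, m-1]} and B₂ = {A ⊆ [n] : |A| mod 2m ∈ [m, 2m-1]} is P-free and has size at least 2^{n-1}. -/
open Finset

/-- Two sets `A, B ⊆ ℕ` form the pattern `P ∈ {+,-}^t` (`true` = `+`):
`A △ B = {j₁ < ⋯ < j_t}` and `P i = +` exactly when `jᵢ ∈ A \ B`. -/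
def FormsPattern {t : ℕ} (A B : Finset ℕ) (P : Fin t → Bool) : Prop :=
  ∃ h : (symmDiff A B).card = t, ∀ i : Fin t,
    (P i = true ↔ ((symmDiff A B).orderIsoOfFin h i : ℕ) ∈ A \ B)

/-- A family is `P`-free if no two of its members form the pattern `P`. -/
def PFree {t : ℕ} (𝒜 : Finset (Finset ℕ)) (P : Fin t → Bool) : Prop :=
  ∀ A ∈ 𝒜, ∀ B ∈ 𝒜, ¬ FormsPattern A B P

/-- `fmax n k P` : maximum size of a `P`-free subfamily of `binom([n],k)`. -/
noncomputable def fmax (n k : ℕ) {t : ℕ} (P : Fin t → Bool) : ℕ := by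
  classical
  exact ((((Finset.Icc 1 n).powersetCard k).powerset).filter
    (fun 𝒜 => PFree 𝒜 P)).sup Finset.card

/-- The interval pattern: `d` plus signs followed by `d` minus signs. -/
def IP (d : ℕ) : Fin (2*d) → Bool := fun i => decide (i.val < d)

/-- The alternating pattern `+-+-⋯+-`. -/
def ALT (d : ℕ) : Fin (2*d) → Bool := fun i => decide (i.val % 2 = 0)

/-
If `A, B` form `P`, then `|A| - |B| = s₊(P) - s₋(P) = ±m`. Two sizes whose residues mod `2m` lie in
the same half `[0, m)` or `[m, 2m)` never differ by exactly `m`, so both families are `P`-free; they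
partition `𝒫([n])`, hence one of them has at least half of its `2ⁿ` members.
-/

lemma card_filter_eq_card_of_equiv {ι α : Type*} [Fintype ι] {s S : Finset α} (e : ι ≃ s)
    (hS : S ⊆ s) (Q : ι → Prop) [DecidablePred Q] (hQ : ∀ i, Q i ↔ (e i : α) ∈ S) :
    #{i | Q i} = #S := by
  refine card_bij (fun i _ => (e i : α)) (fun i hi => (hQ i).1 (mem_filter.1 hi).2)
    (fun i _ j _ hij => e.injective (Subtype.ext hij)) fun x hx => ?_
  refine ⟨e.symm ⟨x, hS hx⟩, mem_filter.2 ⟨mem_univ _, (hQ _).2 ?_⟩, ?_⟩ <;> simp [hx]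

lemma FormsPattern.card_sub_card {t : ℕ} {A B : Finset ℕ} {P : Fin t → Bool}
    (h : FormsPattern A B P) :
    (#A : ℤ) - #B = (#{i | P i = true} : ℤ) - #{i | P i = false} := by
  obtain ⟨ht, hP⟩ := h
  set e := (symmDiff A B).orderIsoOfFin ht
  have hplus : #{i | P i = true} = #(A \ B) :=
    card_filter_eq_card_of_equiv e.toEquiv (le_sup_left.trans (symmDiff_def A B).ge) _ hP
  have hminus : #{i | P i = false} = #(B \ A) := by
    refine card_filter_eq_card_of_equiv e.toEquiv (le_sup_right.trans (symmDiff_def A B).ge) _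
      fun i => ?_
    have hi := (e i).2
    simp only [mem_symmDiff] at hi
    rw [Bool.eq_false_iff, ne_eq, hP i, mem_sdiff, mem_sdiff]
    tauto
  have hA := card_sdiff_add_card_inter A B
  have hB := card_sdiff_add_card_inter B A
  rw [inter_comm] at hB
  omega

lemma pFree_filter_card {t m : ℕ} {P : Fin t → Bool}
    (hP : ∀ A B, FormsPattern A B P → #A = #B + m ∨ #B = #A + m)
    (p : ℕ → Prop) [DecidablePred p] (hp : ∀ x y, p x → p y → x ≠ y + m)
    (𝒰 : Finset (Finset ℕ)) :
    PFree (𝒰.filter fun A => p #A) P := by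
  intro A hA B hB hAB
  rw [mem_filter] at hA hB
  rcases hP A B hAB with h | h
  · exact hp _ _ hA.2 hB.2 h
  · exact hp _ _ hB.2 hA.2 h

lemma Nat.add_mod_two_mul_lt_iff {m : ℕ} (hm : 0 < m) (y : ℕ) :
    (y + m) % (2 * m) < m ↔ m ≤ y % (2 * m) := by
  have hy := Nat.mod_lt y (show 0 < 2 * m by omega)
  rw [Nat.add_mod, Nat.mod_eq_of_lt (show m < 2 * m by omega)]
  rcases lt_or_ge (y % (2 * m)) m with h | h
  · rw [Nat.mod_eq_of_lt (by omega)]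
    omega
  · rw [Nat.mod_eq_sub_mod (by omega), Nat.mod_eq_of_lt (by omega)]
    omega

lemma Nat.add_ne_of_mod_two_mul_lt {m x y : ℕ} (hm : 0 < m)
    (hx : x % (2 * m) < m) (hy : y % (2 * m) < m) : x ≠ y + m := by
  rintro rfl
  exact absurd ((Nat.add_mod_two_mul_lt_iff hm y).1 hx) (by omega)

lemma Nat.add_ne_of_le_mod_two_mul {m x y : ℕ} (hm : 0 < m)
    (hx : m ≤ x % (2 * m)) (hy : m ≤ y % (2 * m)) : x ≠ y + m := by
  rintro rfl
  exact absurd ((Nat.add_mod_two_mul_lt_iff hm y).2 hy) (by omega)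

lemma two_pow_pred_le_or_le {n a b : ℕ} (h : a + b = 2 ^ n) :
    2 ^ (n - 1) ≤ a ∨ 2 ^ (n - 1) ≤ b := by
  have : 2 * 2 ^ (n - 1) ≤ 2 ^ n + 1 := by
    cases n with
    | zero => simp
    | succ n => simp [pow_succ, mul_comm]
  omega

lemma card_filter_mod_lt_add_card_filter_le_mod {α : Type*} {m : ℕ} (𝒰 : Finset (Finset α)) :
    #(𝒰.filter fun A => #A % (2 * m) < m) + #(𝒰.filter fun A => m ≤ #A % (2 * m)) = #𝒰 := by
  simp only [← not_lt]
  exact card_filter_add_card_filter_not _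

theorem stmt0 (n t m : ℕ) (P : Fin t → Bool) (hm : 0 < m)
    (hdiff :
      ((Finset.univ.filter fun i => P i = true).card : ℤ) -
        ((Finset.univ.filter fun i => P i = false).card : ℤ) = m ∨
      ((Finset.univ.filter fun i => P i = false).card : ℤ) -
        ((Finset.univ.filter fun i => P i = true).card : ℤ) = m) :
    (PFree (((Finset.Icc 1 n).powerset).filter fun A => A.card % (2*m) < m) P ∧
      2^(n-1) ≤ ((((Finset.Icc 1 n).powerset).filter fun A => A.card % (2*m) < m)).card) ∨
    (PFree (((Finset.Icc 1 n).powerset).filter fun A => m ≤ A.card % (2*m)) P ∧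
      2^(n-1) ≤ ((((Finset.Icc 1 n).powerset).filter fun A => m ≤ A.card % (2*m))).card) := by
  have hP : ∀ A B, FormsPattern A B P → #A = #B + m ∨ #B = #A + m := fun A B h => by
    have := h.card_sub_card
    omega
  have hsum := card_filter_mod_lt_add_card_filter_le_mod (m := m) (Finset.Icc 1 n).powerset
  rw [card_powerset, Nat.card_Icc, Nat.add_sub_cancel] at hsum
  rcases two_pow_pred_le_or_le hsum with hlow | hhigh
  · exact .inl ⟨pFree_filter_card hP _ (fun _ _ => Nat.add_ne_of_mod_two_mul_lt hm) _, hlow⟩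
  · exact .inr ⟨pFree_filter_card hP _ (fun _ _ => Nat.add_ne_of_le_mod_two_mul hm) _, hhigh⟩
end

section
/- For fixed k, the family 𝒜₀ = {A ⊆ [n] : |A ∩ [(i-1)n/k, in/k)| = 1 for all i ∈ [k]} (transversals of k consecutive blocks, assuming k divides n) is free of the pattern ++−− and has size (n/k)^k. -/
open Finset
open scoped Classical

/-!
Let `A`, `B` meet every block (an interval) exactly once and form `++−−`, so the first two points
`a < a'` of `A △ B` lie in `A \ B` and every point of `B \ A` exceeds `a'`. The point `b` of `B` in
the block of `a` is not in `A` (that block meets `A` only in `a ∉ B`), so `a < a' < b` puts `a'` in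
the same block as `a`, a second point of `A` there. Counting: a transversal of disjoint blocks is
the image of a choice function of the blocks, so there are `∏ |block|` of them.
-/

lemma FormsPattern.exists_lt_lt_of_ppmm {A B : Finset ℕ}
    (h : FormsPattern A B ![true, true, false, false]) :
    ∃ a ∈ A \ B, ∃ a' ∈ A \ B, a < a' ∧ ∀ b ∈ B \ A, a' < b := by
  obtain ⟨hcard, hP⟩ := h
  set e := (symmDiff A B).orderIsoOfFin hcard
  refine ⟨e 0, (hP 0).1 rfl, e 1, (hP 1).1 rfl, e.strictMono (by decide), fun b hb => ?_⟩
  obtain ⟨j, hj⟩ := e.surjective ⟨b, mem_symmDiff.2 (Or.inr (mem_sdiff.1 hb))⟩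
  have hPj : ¬ ![true, true, false, false] j = true := by
    rw [hP j, hj]
    exact fun hb' => (mem_sdiff.1 hb).2 (mem_sdiff.1 hb').1
  have h1j : 1 < j := by
    fin_cases j <;> simp_all
  calc (e 1 : ℕ) < e j := e.strictMono h1j
    _ = b := by rw [hj]

section Transversals

variable {ι α : Type*} [DecidableEq α]

def transversals (s : Finset ι) (t : ι → Finset α) : Finset (Finset α) :=
  (s.biUnion t).powerset.filter fun A => ∀ i ∈ s, #(A ∩ t i) = 1

variable {s : Finset ι} {t : ι → Finset α}

lemma eq_of_mem_of_card_inter_eq_one {A : Finset α} {i : ι} {a b : α} (h : #(A ∩ t i) = 1)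
    (ha : a ∈ A) (ha' : a ∈ t i) (hb : b ∈ A) (hb' : b ∈ t i) : a = b :=
  card_le_one.1 h.le a (mem_inter.2 ⟨ha, ha'⟩) b (mem_inter.2 ⟨hb, hb'⟩)

lemma image_inter_eq_singleton_of_mem_pi [DecidableEq ι] (hd : (s : Set ι).PairwiseDisjoint t)
    {f : ∀ i ∈ s, α} (hf : f ∈ s.pi t) {i : ι} (hi : i ∈ s) :
    s.attach.image (fun j => f j.1 j.2) ∩ t i = {f i hi} := by
  rw [mem_pi] at hf
  ext x
  simp only [mem_inter, mem_image, mem_attach, true_and, Subtype.exists, mem_singleton]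
  constructor
  · rintro ⟨⟨j, hj, rfl⟩, hfj⟩
    obtain rfl := hd.elim_finset hj hi _ (hf j hj) hfj
    rfl
  · rintro rfl
    exact ⟨⟨i, hi, rfl⟩, hf i hi⟩

lemma card_transversals [DecidableEq ι] (hd : (s : Set ι).PairwiseDisjoint t) :
    #(transversals s t) = ∏ i ∈ s, #(t i) := by
  rw [← card_pi]
  symm
  refine card_bij (fun f _ => s.attach.image fun j => f j.1 j.2) (fun f hf => ?_)
    (fun f hf g hg hfg => ?_) (fun A hA => ?_)
  · simp only [transversals, mem_filter, mem_powerset]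
    refine ⟨fun x hx => ?_, fun i hi => ?_⟩
    · obtain ⟨⟨j, hj⟩, -, rfl⟩ := mem_image.1 hx
      exact mem_biUnion.2 ⟨j, hj, mem_pi.1 hf j hj⟩
    · rw [image_inter_eq_singleton_of_mem_pi hd hf hi, card_singleton]
  · funext i hi
    have h := image_inter_eq_singleton_of_mem_pi hd hg hi
    rwa [← hfg, image_inter_eq_singleton_of_mem_pi hd hf hi, singleton_inj] at h
  · simp only [transversals, mem_filter, mem_powerset] at hA
    obtain ⟨hAsub, hAcard⟩ := hA
    choose f hf using fun i hi => card_eq_one.1 (hAcard i hi)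
    have hfA : ∀ i hi, f i hi ∈ A ∩ t i := fun i hi => hf i hi ▸ mem_singleton_self _
    refine ⟨f, mem_pi.2 fun i hi => (mem_inter.1 (hfA i hi)).2, ?_⟩
    ext x
    simp only [mem_image, mem_attach, true_and, Subtype.exists]
    refine ⟨?_, fun hx => ?_⟩
    · rintro ⟨i, hi, rfl⟩
      exact (mem_inter.1 (hfA i hi)).1
    · obtain ⟨i, hi, hxi⟩ := mem_biUnion.1 (hAsub hx)
      have hx' : x ∈ A ∩ t i := mem_inter.2 ⟨hx, hxi⟩
      rw [hf i hi, mem_singleton] at hx'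
      exact ⟨i, hi, hx'.symm⟩

lemma not_formsPattern_ppmm_of_mem_transversals {t : ι → Finset ℕ}
    (ht : ∀ i ∈ s, (t i : Set ℕ).OrdConnected) {A B : Finset ℕ}
    (hA : A ∈ transversals s t) (hB : B ∈ transversals s t) :
    ¬ FormsPattern A B ![true, true, false, false] := by
  intro h
  obtain ⟨a, ha, a', ha', haa', ha'B⟩ := h.exists_lt_lt_of_ppmm
  simp only [transversals, mem_filter, mem_powerset] at hA hB
  rw [mem_sdiff] at ha ha'
  obtain ⟨i, hi, hai⟩ := mem_biUnion.1 (hA.1 ha.1)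
  obtain ⟨b, hb⟩ := card_eq_one.1 (hB.2 i hi)
  obtain ⟨hbB, hbi⟩ := mem_inter.1 (hb ▸ mem_singleton_self b)
  have hbA : b ∉ A := fun hbA =>
    ha.2 (eq_of_mem_of_card_inter_eq_one (hA.2 i hi) hbA hbi ha.1 hai ▸ hbB)
  have hab : a' < b := ha'B b (mem_sdiff.2 ⟨hbB, hbA⟩)
  have ha'i : a' ∈ t i := (ht i hi).out hai hbi ⟨haa'.le, hab.le⟩
  exact haa'.ne (eq_of_mem_of_card_inter_eq_one (hA.2 i hi) ha.1 hai ha'.1 ha'i)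

lemma pFree_transversals_ppmm {t : ι → Finset ℕ} (ht : ∀ i ∈ s, (t i : Set ℕ).OrdConnected) :
    PFree (transversals s t) ![true, true, false, false] :=
  fun _ hA _ hB => not_formsPattern_ppmm_of_mem_transversals ht hA hB

end Transversals

def block (m i : ℕ) : Finset ℕ := Ioc ((i - 1) * m) (i * m)

lemma biUnion_block (k m : ℕ) : (Icc 1 k).biUnion (block m) = Icc 1 (k * m) := by
  induction k with
  | zero => simp
  | succ k ih =>
    rw [← insert_Icc_right_eq_Icc_add_one (by omega), biUnion_insert, ih]
    ext x
    simp only [mem_union, block, mem_Ioc, mem_Icc, add_tsub_cancel_right, add_mul, one_mul]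
    omega

lemma card_block (m : ℕ) {i : ℕ} (hi : 1 ≤ i) : #(block m i) = m := by
  rw [block, Nat.card_Ioc, ← Nat.sub_mul, Nat.sub_sub_self hi, one_mul]

lemma ordConnected_block (m i : ℕ) : (block m i : Set ℕ).OrdConnected := by
  rw [block, coe_Ioc]
  exact Set.ordConnected_Ioc

lemma pairwiseDisjoint_block (m : ℕ) (s : Set ℕ) : s.PairwiseDisjoint (block m) := by
  intro i _ j _ hij
  simp only [block, disjoint_left, mem_Ioc]
  intro x hx hx'
  rcases lt_or_gt_of_ne hij with h | h
  · have := Nat.mul_le_mul_right m (Nat.le_sub_one_of_lt h)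
    omega
  · have := Nat.mul_le_mul_right m (Nat.le_sub_one_of_lt h)
    omega

theorem stmt3_general (n k : ℕ) (hdvd : k ∣ n) :
    PFree (((Finset.Icc 1 n).powerset).filter
        (fun A => ∀ i ∈ Finset.Icc 1 k,
          (A ∩ Finset.Ioc ((i-1)*(n/k)) (i*(n/k))).card = 1))
      (![true, true, false, false]) ∧
    (((Finset.Icc 1 n).powerset).filter
        (fun A => ∀ i ∈ Finset.Icc 1 k,
          (A ∩ Finset.Ioc ((i-1)*(n/k)) (i*(n/k))).card = 1)).card = (n/k)^k := by
  have hn : Icc 1 n = (Icc 1 k).biUnion (block (n / k)) := by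
    rw [biUnion_block, Nat.mul_div_cancel' hdvd]
  have hcard : #(transversals (Icc 1 k) (block (n / k))) = (n / k) ^ k := by
    rw [card_transversals (pairwiseDisjoint_block _ _),
      prod_congr rfl fun i hi => card_block _ (mem_Icc.1 hi).1, prod_const, Nat.card_Icc,
      add_tsub_cancel_right]
  rw [hn]
  -- the statement's `filter` carries the classical `DecidablePred` instance
  convert And.intro (pFree_transversals_ppmm fun i _ => ordConnected_block (n / k) i) hcard <;>
    exact filter_congr_decidable _ _ _

theorem stmt3 (n k : ℕ) (hk : 0 < k) (hdvd : k ∣ n) :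
    PFree (((Finset.Icc 1 n).powerset).filter
        (fun A => ∀ i ∈ Finset.Icc 1 k,
          (A ∩ Finset.Ioc ((i-1)*(n/k)) (i*(n/k))).card = 1))
      (![true, true, false, false]) ∧
    (((Finset.Icc 1 n).powerset).filter
        (fun A => ∀ i ∈ Finset.Icc 1 k,
          (A ∩ Finset.Ioc ((i-1)*(n/k)) (i*(n/k))).card = 1)).card = (n/k)^k :=
  stmt3_general n k hdvd
end

section
/- Let 𝒜 ⊆ binom([2k], k) with |𝒜| = α·binom(2k,k) and α ≥ 2/k. Then the number of unordered pairs {A,B} ⊆ 𝒜 with |A △ B| = 2 is at least (α²k²/2)·binom(2k-2, k-1). -/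
/-! For a `(k+1)`-set `C` let `y_C` be the number of members of `𝒜` inside `C`. Two distinct
`k`-sets have symmetric difference of size two exactly when their union is a `(k+1)`-set, so the
pairs are counted by `∑_C (y_C choose 2)`, while each `k`-set lies in exactly `k` of the sets `C`,
so `∑_C y_C = k |𝒜|`. Cauchy–Schwarz bounds `∑_C y_C ^ 2` from below by `(k |𝒜|)² / (2k choose k+1)`,
and the identities relating `2k choose k`, `2k choose k+1` and `2k-2 choose k-1` turn this into the
claimed bound. -/

open Finset

section
variable {β : Type*} [DecidableEq β] {r : ℕ}

lemma card_union_eq_succ_iff_card_symmDiff_eq_two {A B : Finset β} (hA : #A = r)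
    (hB : #B = r) : #(A ∪ B) = r + 1 ↔ #(symmDiff A B) = 2 := by
  have hunion := card_union_add_card_inter A B
  rw [symmDiff_eq_sup_sdiff_inf, sup_eq_union, inf_eq_inter,
    card_sdiff_of_subset (inter_subset_left.trans subset_union_left)]
  omega

lemma union_eq_of_card_eq_succ {A B C : Finset β} (hAC : A ⊆ C) (hBC : B ⊆ C)
    (hA : #A = r) (hB : #B = r) (hC : #C = r + 1) (hAB : A ≠ B) : A ∪ B = C := by
  have hlt : A ⊂ A ∪ B := by
    refine ssubset_of_subset_of_ne subset_union_left fun h => hAB ?_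
    exact (eq_of_subset_of_card_le (union_eq_left.1 h.symm) (by omega)).symm
  exact eq_of_subset_of_card_le (union_subset hAC hBC) (by have := card_lt_card hlt; omega)

variable {U : Finset β} {𝒜 : Finset (Finset β)}

lemma sum_card_filter_subset_powersetCard_succ (h𝒜 : 𝒜 ⊆ U.powersetCard r) :
    ∑ C ∈ U.powersetCard (r + 1), #(𝒜.filter (· ⊆ C)) = (#U - r) * #𝒜 := by
  have h := sum_card_bipartiteAbove_eq_sum_card_bipartiteBelow (s := 𝒜)
    (t := U.powersetCard (r + 1)) (r := (· ⊆ ·))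
  simp only [bipartiteAbove, bipartiteBelow] at h
  rw [← h, sum_const_nat fun A hA => ?_, mul_comm]
  obtain ⟨hAU, hAr⟩ := mem_powersetCard.1 (h𝒜 hA)
  rw [card_filter_powersetCard_subset A U _ hAU (by omega), hAr, Nat.add_sub_cancel_left,
    Nat.choose_one_right]

lemma union_eq_of_pair_mem_powersetCard_two (h𝒜 : 𝒜 ⊆ U.powersetCard r) {A B C : Finset β}
    (hC : #C = r + 1) (hAB : A ≠ B) (h : {A, B} ∈ (𝒜.filter (· ⊆ C)).powersetCard 2) :
    A ∪ B = C := by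
  have hsub := (mem_powersetCard.1 h).1
  obtain ⟨hA, hAC⟩ := mem_filter.1 (hsub (mem_insert_self A {B}))
  obtain ⟨hB, hBC⟩ := mem_filter.1 (hsub (mem_insert_of_mem (mem_singleton_self B)))
  exact union_eq_of_card_eq_succ hAC hBC (mem_powersetCard.1 (h𝒜 hA)).2
    (mem_powersetCard.1 (h𝒜 hB)).2 hC hAB

lemma card_pairs_symmDiff_eq_two_eq_sum_choose (h𝒜 : 𝒜 ⊆ U.powersetCard r) :
    #((𝒜.powersetCard 2).filter fun s => ∃ A ∈ s, ∃ B ∈ s, A ≠ B ∧ #(symmDiff A B) = 2) =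
      ∑ C ∈ U.powersetCard (r + 1), (#(𝒜.filter (· ⊆ C))).choose 2 := by
  simp_rw [← card_powersetCard]
  rw [← card_biUnion]
  · congr 1
    ext s
    simp only [mem_filter, mem_powersetCard, mem_biUnion]
    constructor
    · rintro ⟨⟨hs𝒜, hs⟩, A, hA, B, hB, hAB, hsymm⟩
      have hAr := mem_powersetCard.1 (h𝒜 (hs𝒜 hA))
      have hBr := mem_powersetCard.1 (h𝒜 (hs𝒜 hB))
      have hs_eq : s = {A, B} := (eq_of_subset_of_card_le
        (insert_subset hA (singleton_subset_iff.2 hB)) (by rw [hs, card_pair hAB])).symm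
      subst hs_eq
      refine ⟨A ∪ B, ⟨union_subset hAr.1 hBr.1,
        (card_union_eq_succ_iff_card_symmDiff_eq_two hAr.2 hBr.2).2 hsymm⟩, ?_, hs⟩
      intro X hX
      rcases mem_insert.1 hX with rfl | hX
      · exact mem_filter.2 ⟨hs𝒜 hX, subset_union_left⟩
      · rw [mem_singleton.1 hX]; exact mem_filter.2 ⟨hs𝒜 hB, subset_union_right⟩
    · rintro ⟨C, hC, hsC, hs⟩
      obtain ⟨A, B, hAB, rfl⟩ := card_eq_two.1 hs
      have hunion := union_eq_of_pair_mem_powersetCard_two h𝒜 hC.2 hAB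
        (mem_powersetCard.2 ⟨hsC, hs⟩)
      have hA := mem_filter.1 (hsC (mem_insert_self A {B}))
      have hB := mem_filter.1 (hsC (mem_insert_of_mem (mem_singleton_self B)))
      have hsymm := (card_union_eq_succ_iff_card_symmDiff_eq_two (mem_powersetCard.1 (h𝒜 hA.1)).2
        (mem_powersetCard.1 (h𝒜 hB.1)).2).1 (hunion ▸ hC.2)
      exact ⟨⟨fun X hX => (mem_filter.1 (hsC hX)).1, hs⟩, A, mem_insert_self A {B}, B,
        mem_insert_of_mem (mem_singleton_self B), hAB, hsymm⟩
  · intro C hC C' hC' hCC'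
    rw [Function.onFun, disjoint_left]
    intro s hs hs'
    obtain ⟨A, B, hAB, rfl⟩ := card_eq_two.1 (mem_powersetCard.1 hs).2
    exact hCC' <|
      (union_eq_of_pair_mem_powersetCard_two h𝒜 (mem_powersetCard.1 hC).2 hAB hs).symm.trans
        (union_eq_of_pair_mem_powersetCard_two h𝒜 (mem_powersetCard.1 hC').2 hAB hs')

end

lemma sum_div_card_sub_le_sum_choose_two {ι : Type*} (s : Finset ι) (y : ι → ℕ) :
    ((∑ i ∈ s, (y i : ℝ)) ^ 2 / #s - ∑ i ∈ s, (y i : ℝ)) / 2 ≤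
      ∑ i ∈ s, ((y i).choose 2 : ℝ) := by
  have hcs : (∑ i ∈ s, (y i : ℝ)) ^ 2 / #s ≤ ∑ i ∈ s, (y i : ℝ) ^ 2 :=
    div_le_of_le_mul₀ (Nat.cast_nonneg _) (sum_nonneg fun i _ => sq_nonneg _)
      (by rw [mul_comm]; exact sq_sum_le_card_mul_sum_sq)
  have hchoose : ∑ i ∈ s, ((y i).choose 2 : ℝ) =
      (∑ i ∈ s, (y i : ℝ) ^ 2 - ∑ i ∈ s, (y i : ℝ)) / 2 := by
    rw [← sum_sub_distrib, sum_div]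
    exact sum_congr rfl fun i _ => by rw [Nat.cast_choose_two]; ring
  linarith

/-- `M`, `N`, `L` stand for `(2k).choose k`, `(2k).choose (k+1)` and `(2k-2).choose (k-1)`. -/
lemma pair_count_bound_arith {k α M N L : ℝ} (hk : 1 ≤ k) (hαk : 2 ≤ α * k) (hL : 0 ≤ L)
    (hN : 0 < N) (hNM : N * (k + 1) = M * k) (hML : k * M = 2 * (2 * k - 1) * L) :
    α ^ 2 * k ^ 2 / 2 * L ≤ ((k * α * M) ^ 2 / N - k * α * M) / 2 := by
  have hα : 0 < α := by nlinarith
  have hsq : (k * α * M) ^ 2 / N = 2 * (2 * k - 1) * L * α ^ 2 * (k + 1) := by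
    rw [div_eq_iff hN.ne', ← hML]; linear_combination (-(k * α ^ 2 * M)) * hNM
  rw [hsq, show k * α * M = 2 * (2 * k - 1) * L * α by rw [← hML]; ring]
  have key : 0 ≤ (α * k - 2) * (3 * k ^ 2 + 2 * k - 2) + 2 * k ^ 2 + 6 * k - 4 := by
    nlinarith
  nlinarith [mul_nonneg (mul_nonneg hL hα.le) key]

lemma mul_choose_two_mul_self_eq {k : ℕ} (hk : 0 < k) :
    k * (2 * k).choose k = 2 * (2 * k - 1) * (2 * k - 2).choose (k - 1) := by
  obtain ⟨n, rfl⟩ : ∃ n, k = n + 1 := ⟨k - 1, by omega⟩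
  have h := Nat.succ_mul_centralBinom_succ n
  simp only [Nat.centralBinom_eq_two_mul_choose] at h
  rw [h, show 2 * (n + 1) - 1 = 2 * n + 1 by omega, show 2 * (n + 1) - 2 = 2 * n by omega,
    Nat.add_sub_cancel]

theorem stmt5 (k : ℕ) (hk : 0 < k) (𝒜 : Finset (Finset ℕ))
    (h𝒜 : 𝒜 ⊆ (Finset.Icc 1 (2*k)).powersetCard k)
    (α : ℝ) (hcard : (𝒜.card : ℝ) = α * ((2*k).choose k)) (hα : 2/(k:ℝ) ≤ α) :
    (α^2 * k^2 / 2) * ((2*k-2).choose (k-1)) ≤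
      (((𝒜.powersetCard 2).filter
        (fun s => ∃ A ∈ s, ∃ B ∈ s, A ≠ B ∧ (symmDiff A B).card = 2)).card : ℝ) := by
  have hsum : ∑ C ∈ (Icc 1 (2 * k)).powersetCard (k + 1), (#(𝒜.filter (· ⊆ C)) : ℝ) =
      k * α * (2 * k).choose k := by
    have h := sum_card_filter_subset_powersetCard_succ h𝒜
    rw [Nat.card_Icc, show 2 * k + 1 - 1 - k = k by omega] at h
    rw [← Nat.cast_sum, h]; push_cast [hcard]; ring
  have hNM : ((2 * k).choose (k + 1) : ℝ) * (k + 1) = (2 * k).choose k * k := by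
    exact_mod_cast (show 2 * k - k = k by omega) ▸ Nat.choose_succ_right_eq (2 * k) k
  have hML : (k : ℝ) * (2 * k).choose k = 2 * (2 * k - 1) * (2 * k - 2).choose (k - 1) := by
    have h := congrArg (Nat.cast : ℕ → ℝ) (mul_choose_two_mul_self_eq hk)
    push_cast [Nat.cast_sub (by omega : 1 ≤ 2 * k)] at h
    exact h
  rw [card_pairs_symmDiff_eq_two_eq_sum_choose h𝒜, Nat.cast_sum]
  refine le_trans ?_ (sum_div_card_sub_le_sum_choose_two _ _)
  rw [hsum, card_powersetCard, Nat.card_Icc, Nat.add_sub_cancel]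
  have hk1 : (1 : ℝ) ≤ k := by exact_mod_cast hk
  have hαk : 2 ≤ α * k := by rwa [div_le_iff₀ (by linarith)] at hα
  exact pair_count_bound_arith hk1 hαk (Nat.cast_nonneg _)
    (by exact_mod_cast Nat.choose_pos (by omega)) hNM hML
end

section
/- Let 𝒜 ⊆ binom([2k], k) be a family such that |A △ B| ≠ 2 for all A, B ∈ 𝒜. Then |𝒜| ≤ (1/k)·binom(2k, k). -/
open Finset

/-!
Double counting of the pairs `A ⊆ C` with `A ∈ 𝒜` and `C` a `(k+1)`-subset of the ground set `s`:
every `A` lies in `#s - k` such `C`, while no `C` contains two members of `𝒜`, since two distinct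
`k`-subsets of a `(k+1)`-set have symmetric difference of size `2`. Hence
`#𝒜 * (#s - k) ≤ choose #s (k+1)`, and for `#s = 2k` the right side is at most `choose (2k) k`.
-/

namespace Finset

variable {α : Type*} [DecidableEq α]

theorem card_sdiff_le_card_filter_superset_powersetCard {s A : Finset α} (hA : A ⊆ s) :
    #(s \ A) ≤ #{C ∈ s.powersetCard (#A + 1) | A ⊆ C} := by
  refine card_le_card_of_injOn (insert · A) (fun x hx => ?_)
    ((insert_inj_on A).mono fun x hx => (mem_sdiff.1 hx).2)
  obtain ⟨hxs, hxA⟩ := mem_sdiff.1 hx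
  simp only [coe_filter, Set.mem_ofPred_eq, mem_powersetCard]
  exact ⟨⟨insert_subset hxs hA, card_insert_of_notMem hxA⟩, subset_insert x A⟩

theorem card_symmDiff_eq_two_of_subset_of_card_add_one {A B C : Finset α} (hAB : A ≠ B)
    (hAC : A ⊆ C) (hBC : B ⊆ C) (hA : #A + 1 = #C) (hB : #B + 1 = #C) :
    #(symmDiff A B) = 2 := by
  have hunion_le : #(A ∪ B) ≤ #C := card_le_card (union_subset hAC hBC)
  have hunion_gt : #A < #(A ∪ B) := by
    refine card_lt_card (ssubset_iff_subset_ne.2 ⟨subset_union_left, fun h => hAB ?_⟩)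
    exact (eq_of_subset_of_card_le (union_eq_left.1 h.symm) (by omega)).symm
  have := card_union_add_card_inter A B
  rw [symmDiff_eq_sup_sdiff_inf, sup_eq_union, inf_eq_inter,
    card_sdiff_of_subset inter_subset_union]
  omega

theorem card_mul_le_choose_of_card_symmDiff_ne_two {s : Finset α} {k : ℕ}
    {𝒜 : Finset (Finset α)} (h𝒜 : 𝒜 ⊆ s.powersetCard k)
    (h : ∀ A ∈ 𝒜, ∀ B ∈ 𝒜, #(symmDiff A B) ≠ 2) :
    #𝒜 * (#s - k) ≤ (#s).choose (k + 1) := by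
  rw [← card_powersetCard, ← mul_one #(s.powersetCard (k + 1))]
  refine card_mul_le_card_mul (· ⊆ ·) (fun A hA => ?_)
    (fun C hC => card_le_one.2 fun A hA B hB => ?_)
  · obtain ⟨hAs, rfl⟩ := mem_powersetCard.1 (h𝒜 hA)
    rw [← card_sdiff_of_subset hAs]
    exact card_sdiff_le_card_filter_superset_powersetCard hAs
  · rw [mem_bipartiteBelow] at hA hB
    obtain ⟨-, hC⟩ := mem_powersetCard.1 hC
    obtain ⟨-, hAk⟩ := mem_powersetCard.1 (h𝒜 hA.1)
    obtain ⟨-, hBk⟩ := mem_powersetCard.1 (h𝒜 hB.1)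
    by_contra hAB
    exact h A hA.1 B hB.1 <| card_symmDiff_eq_two_of_subset_of_card_add_one hAB hA.2 hB.2
      (by omega) (by omega)

end Finset

theorem stmt6 (k : ℕ) (hk : 0 < k) (𝒜 : Finset (Finset ℕ))
    (h𝒜 : 𝒜 ⊆ (Finset.Icc 1 (2*k)).powersetCard k)
    (h : ∀ A ∈ 𝒜, ∀ B ∈ 𝒜, (symmDiff A B).card ≠ 2) :
    (𝒜.card : ℝ) ≤ (1/(k:ℝ)) * ((2*k).choose k) := by
  have hground : #(Icc 1 (2 * k)) = 2 * k := by simp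
  have hcount := card_mul_le_choose_of_card_symmDiff_ne_two h𝒜 h
  rw [hground, show 2 * k - k = k by omega] at hcount
  have hmiddle : (2 * k).choose (k + 1) ≤ (2 * k).choose k := by
    simpa [show 2 * k / 2 = k by omega] using Nat.choose_le_middle (k + 1) (2 * k)
  rw [one_div, inv_mul_eq_div, le_div_iff₀ (by exact_mod_cast hk)]
  exact_mod_cast hcount.trans hmiddle
end

section
/- Let P be a d-balanced pattern with P₁ ≠ P_{2d} and let Q = P₂⋯P_{2d-1} be the pattern obtained by deleting the first and last signs. Let i < j be elements of a ground set not in X, let U be disjoint from X ∪ {i,j}, and let 𝒞 ⊆ binom(X, ℓ) where X is an interval strictly between i and j. If every set of the form C ∪ U ∪ {h} with C ∈ 𝒞 and h ∈ {i,j} lies in a P-free family 𝒜, where U ⊆ [n] \ [i,j], then 𝒞 is Q-free. -/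
open Finset

/-!
Read the signs of a pair `(A, B)` along `A △ B` in increasing order. Putting `i` into one set
and `j` into the other, with `i < A △ B < j`, prepends and appends one sign to this word, while
adding a common set `U` that avoids `[i, j]` leaves it unchanged. So if `C₁, C₂ ∈ 𝒞` formed `Q`,
the members `Cₖ ∪ U ∪ {i or j}` of `𝒜`, with `i` on the side prescribed by `P₁`, would form `P`.
-/

section
variable {α : Type*} [LinearOrder α]

def patternWord (A B : Finset α) : List Bool :=
  (symmDiff A B).sort.map fun x => decide (x ∈ A \ B)

theorem sort_insert_insert_of_forall_between {S : Finset α} {i j : α} (hij : i < j)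
    (hS : ∀ x ∈ S, i < x ∧ x < j) :
    (insert i (insert j S)).sort = i :: S.sort ++ [j] := by
  refine (sortedLT_sort _).eq_of_mem_iff (List.Pairwise.sortedLT ?_) fun x => by simp; tauto
  simp only [List.cons_append, List.pairwise_cons, List.pairwise_append, List.mem_append,
    mem_sort, List.mem_singleton, List.not_mem_nil]
  refine ⟨?_, (sortedLT_sort S).pairwise, by simp, fun x hx _ h => h ▸ (hS x hx).2⟩
  rintro x (hx | rfl)
  exacts [(hS x hx).1, hij]

theorem patternWord_comm (A B : Finset α) : patternWord B A = (patternWord A B).map (!·) := by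
  rw [patternWord, patternWord, symmDiff_comm, List.map_map]
  refine List.map_congr_left fun x hx => ?_
  rw [mem_sort, mem_symmDiff] at hx
  rcases hx with hx | hx <;> simp [hx]

theorem patternWord_union_of_disjoint {A B U : Finset α} (h : Disjoint (symmDiff A B) U) :
    patternWord (A ∪ U) (B ∪ U) = patternWord A B := by
  have hsymm : symmDiff (A ∪ U) (B ∪ U) = symmDiff A B := by
    rw [← sdiff_eq_self_of_disjoint h]; ext; simp [mem_symmDiff]; tauto
  rw [patternWord, patternWord, hsymm]
  refine List.map_congr_left fun x hx => ?_
  have hxU : x ∉ U := disjoint_left.1 h ((mem_sort _).1 hx)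
  simp [hxU]

theorem patternWord_union_singleton_union_singleton {A B : Finset α} {i j : α} (hij : i < j)
    (hi : i ∉ A ∪ B) (hj : j ∉ A ∪ B) (hAB : ∀ x ∈ symmDiff A B, i < x ∧ x < j) :
    patternWord (A ∪ {i}) (B ∪ {j}) = true :: patternWord A B ++ [false] := by
  have hsymm : symmDiff (A ∪ {i}) (B ∪ {j}) = insert i (insert j (symmDiff A B)) := by
    ext x; simp only [mem_symmDiff, mem_union, mem_singleton, mem_insert] at hi hj ⊢; grind
  rw [patternWord, patternWord, hsymm, sort_insert_insert_of_forall_between hij hAB]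
  have hmid : (symmDiff A B).sort.map (fun x => decide (x ∈ (A ∪ {i}) \ (B ∪ {j}))) =
      (symmDiff A B).sort.map (fun x => decide (x ∈ A \ B)) := by
    refine List.map_congr_left fun x hx => ?_
    obtain ⟨hix, hxj⟩ := hAB x ((mem_sort _).1 hx)
    simp [hix.ne', hxj.ne]
  rw [List.cons_append, List.map_cons, List.map_append, hmid]
  simp_all [hij.ne, hij.ne']

theorem patternWord_union_union_singleton {A B U : Finset α} {i j : α} (hij : i < j)
    (hAB : ∀ x ∈ A ∪ B, i < x ∧ x < j) (hU : ∀ u ∈ U, u < i ∨ j < u) :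
    patternWord (A ∪ U ∪ {i}) (B ∪ U ∪ {j}) = true :: patternWord A B ++ [false] := by
  have hdisj : Disjoint (symmDiff (A ∪ {i}) (B ∪ {j})) U := by
    refine disjoint_left.2 fun x hx hxU => ?_
    have hx' := symmDiff_subset_union hx
    have hxAB := hAB x
    simp only [mem_union, mem_singleton] at hx' hxAB
    grind
  rw [union_right_comm A, union_right_comm B, patternWord_union_of_disjoint hdisj,
    patternWord_union_singleton_union_singleton hij (fun h => (hAB i h).1.false)
    (fun h => (hAB j h).2.false) fun x hx => hAB x (symmDiff_subset_union hx)]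

end

theorem formsPattern_iff_patternWord {t : ℕ} {A B : Finset ℕ} {P : Fin t → Bool} :
    FormsPattern A B P ↔ patternWord A B = List.ofFn P := by
  constructor
  · rintro ⟨hcard, hP⟩
    refine List.ext_getElem (by simp [patternWord, hcard]) fun n h₁ h₂ => ?_
    have := hP ⟨n, by simpa using h₂⟩
    rw [coe_orderIsoOfFin_apply, orderEmbOfFin_apply, Fin.getElem_fin] at this
    simp only [patternWord, List.getElem_map, List.getElem_ofFn]
    exact Bool.eq_iff_iff.2 (by simpa using this.symm)
  · intro hw
    have hcard : (symmDiff A B).card = t := by simpa [patternWord] using congrArg List.length hw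
    refine ⟨hcard, fun k => ?_⟩
    have := List.getElem_of_eq hw (i := k) (by simp [patternWord, hcard])
    rw [coe_orderIsoOfFin_apply, orderEmbOfFin_apply]
    simp [patternWord] at this
    simp [← this]

theorem List.ofFn_eq_cons_append {α : Type*} {n : ℕ} (hn : 2 ≤ n) (f : Fin n → α) :
    List.ofFn f = f ⟨0, by omega⟩ :: List.ofFn (fun q : Fin (n - 2) => f ⟨q + 1, by omega⟩) ++
      [f ⟨n - 1, by omega⟩] := by
  obtain ⟨m, rfl⟩ : ∃ m, n = m + 2 := ⟨n - 2, by omega⟩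
  rw [List.ofFn_succ, List.ofFn_succ', List.concat_eq_append]
  rfl

theorem stmt8 (d : ℕ) (hd : 0 < d) (P : Fin (2*d) → Bool)
    (hends : P ⟨0, by omega⟩ ≠ P ⟨2*d-1, by omega⟩)
    (i j ℓ : ℕ) (hij : i < j) (X : Finset ℕ) (hX : ∀ x ∈ X, i < x ∧ x < j)
    (U : Finset ℕ) (hU : ∀ u ∈ U, u < i ∨ j < u)
    (𝒞 : Finset (Finset ℕ)) (h𝒞 : 𝒞 ⊆ X.powersetCard ℓ)
    (𝒜 : Finset (Finset ℕ)) (h𝒜free : PFree 𝒜 P)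
    (hmem : ∀ C ∈ 𝒞, ∀ h ∈ ({i, j} : Finset ℕ), C ∪ U ∪ {h} ∈ 𝒜) :
    PFree 𝒞 (fun q : Fin (2*d-2) => P ⟨q.val + 1, by have := q.isLt; omega⟩) := by
  intro C₁ h₁ C₂ h₂ hQ
  have hC : ∀ x ∈ C₁ ∪ C₂, i < x ∧ x < j := fun x hx =>
    hX x (union_subset (mem_powersetCard.1 (h𝒞 h₁)).1 (mem_powersetCard.1 (h𝒞 h₂)).1 hx)
  rw [formsPattern_iff_patternWord] at hQ
  have hword := List.ofFn_eq_cons_append (by omega : 2 ≤ 2 * d) P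
  cases hP0 : P ⟨0, by omega⟩
  · have hPl : P ⟨2*d-1, by omega⟩ = true := by simpa [hP0] using hends.symm
    refine h𝒜free _ (hmem C₁ h₁ j (by simp)) _ (hmem C₂ h₂ i (by simp)) ?_
    rw [formsPattern_iff_patternWord, patternWord_comm,
      patternWord_union_union_singleton hij (by rwa [union_comm]) hU, patternWord_comm, hQ, hword,
      hP0, hPl]
    simp [Function.comp_def]
  · have hPl : P ⟨2*d-1, by omega⟩ = false := by simpa [hP0] using hends.symm
    refine h𝒜free _ (hmem C₁ h₁ i (by simp)) _ (hmem C₂ h₂ j (by simp)) ?_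
    rw [formsPattern_iff_patternWord, patternWord_union_union_singleton hij hC hU, hQ, hword,
      hP0, hPl]
end

section
/- Let d, m, D ∈ ℕ with 2md² ≤ D. Suppose 𝒞 ⊆ [m]^D contains no pair x, y such that y d-dominates x. Then |𝒞| ≤ 2·m^{D-1}. -/
/-!
Double count the pairs `(x, T)` with `x ∈ 𝒞` and `T` a `d`-set of coordinates on which `x` is
constant. Two members of `𝒞` that are constant on the same `T` and agree off `T` are equal, since
otherwise one `d`-dominates the other; so each `T` occurs in at most `m ^ (D - d)` pairs. By
convexity of `n ↦ n.choose d`, each `x` is constant on at least `m * (D / m).choose d` of the sets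
`T`. Finally `D.choose d ≤ 2 * m ^ d * (D / m).choose d` when `2 m d² ≤ D`, by Bernoulli's
inequality.
-/

open Finset

namespace Nat

lemma choose_add_mul_choose_le_choose_add (q k t : ℕ) :
    q.choose (k + 1) + t * (q - 1).choose k ≤ (q + t).choose (k + 1) := by
  induction t with
  | zero => simp
  | succ t ih =>
    have : (q - 1).choose k ≤ (q + t).choose k := choose_le_choose _ (by omega)
    rw [← add_assoc, choose_succ_succ', succ_mul]
    omega

lemma choose_le_choose_sub_add_mul_choose (q k t : ℕ) (ht : t ≤ q) :
    q.choose (k + 1) ≤ (q - t).choose (k + 1) + t * (q - 1).choose k := by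
  induction t with
  | zero => simp
  | succ t ih =>
    have hpascal :
        (q - t).choose (k + 1) = (q - (t + 1)).choose k + (q - (t + 1)).choose (k + 1) := by
      rw [show q - t = q - (t + 1) + 1 by omega, choose_succ_succ']
    have : (q - (t + 1)).choose k ≤ (q - 1).choose k := choose_le_choose _ (by omega)
    have := ih (by omega)
    rw [succ_mul]
    omega

/-- The line through `(q, q.choose (k + 1))` with slope `(q - 1).choose k` lies below the graph of
the discretely convex function `n ↦ n.choose (k + 1)`. -/
lemma choose_add_mul_choose_le (q n k : ℕ) :
    q.choose (k + 1) + n * (q - 1).choose k ≤ n.choose (k + 1) + q * (q - 1).choose k := by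
  rcases le_total q n with hqn | hnq
  · have := choose_add_mul_choose_le_choose_add q k (n - q)
    rw [Nat.add_sub_cancel' hqn] at this
    have : n * (q - 1).choose k = (n - q) * (q - 1).choose k + q * (q - 1).choose k := by
      rw [← add_mul, Nat.sub_add_cancel hqn]
    omega
  · have := choose_le_choose_sub_add_mul_choose q k (q - n) (by omega)
    rw [Nat.sub_sub_self hnq] at this
    have : q * (q - 1).choose k = (q - n) * (q - 1).choose k + n * (q - 1).choose k := by
      rw [← add_mul, Nat.sub_add_cancel hnq]
    omega


lemma add_pow_succ_le (b c n : ℕ) :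
    (b + c) ^ (n + 1) ≤ b ^ (n + 1) + (n + 1) * c * (b + c) ^ n := by
  induction n with
  | zero => simp
  | succ n ih =>
    calc (b + c) ^ (n + 2) = (b + c) * (b + c) ^ (n + 1) := by ring
    _ ≤ (b + c) * (b ^ (n + 1) + (n + 1) * c * (b + c) ^ n) := by gcongr
    _ = b ^ (n + 2) + c * b ^ (n + 1) + (n + 1) * c * (b + c) ^ (n + 1) := by ring
    _ ≤ b ^ (n + 2) + c * (b + c) ^ (n + 1) + (n + 1) * c * (b + c) ^ (n + 1) := by
        gcongr; exact le_add_right b c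
    _ = b ^ (n + 2) + (n + 2) * c * (b + c) ^ (n + 1) := by ring

lemma pow_le_two_mul_sub_pow {D e d : ℕ} (h : 2 * d * e ≤ D) : D ^ d ≤ 2 * (D - e) ^ d := by
  obtain _ | n := d
  · simp
  have hD : D = (D - e) + e := by
    have : e ≤ D := by nlinarith
    omega
  have hbern := add_pow_succ_le (D - e) e n
  rw [← hD] at hbern
  have : 2 * ((n + 1) * e * D ^ n) ≤ D ^ (n + 1) := by
    rw [pow_succ']
    calc 2 * ((n + 1) * e * D ^ n) = 2 * (n + 1) * e * D ^ n := by ring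
    _ ≤ D * D ^ n := by gcongr
  omega

lemma le_div_of_two_mul_mul_sq_le {m d D : ℕ} (hm : 0 < m) (h : 2 * m * d ^ 2 ≤ D) :
    d ≤ D / m :=
  (Nat.le_div_iff_mul_le hm).2 <| by
    rcases Nat.eq_zero_or_pos d with rfl | hd
    · simp
    · nlinarith [Nat.mul_le_mul_left (d * m) (show 1 ≤ 2 * d by omega)]

lemma descFactorial_le_two_mul_pow_mul_descFactorial_div {m d D : ℕ} (hm : 0 < m)
    (h : 2 * m * d ^ 2 ≤ D) : D.descFactorial d ≤ 2 * m ^ d * (D / m).descFactorial d := by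
  set q := D / m
  have hdq : d ≤ q := le_div_of_two_mul_mul_sq_le hm h
  -- `m * (q + 1 - d)` is the smallest factor `m * (q - j)` of `m ^ d * q.descFactorial d`
  have hfactor : D - (m * d - 1) ≤ m * (q + 1 - d) := by
    have hD : D < m * q + m := by
      have := Nat.lt_div_mul_add (a := D) hm
      rw [mul_comm]; exact this
    have : m * (q + 1 - d) + m * d = m * q + m := by
      rw [← Nat.mul_add, Nat.sub_add_cancel (by omega), Nat.mul_succ]
    omega
  have he : 2 * d * (m * d - 1) ≤ D :=
    calc 2 * d * (m * d - 1) ≤ 2 * d * (m * d) := by gcongr; exact Nat.sub_le _ _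
    _ = 2 * m * d ^ 2 := by ring
    _ ≤ D := h
  calc D.descFactorial d ≤ D ^ d := descFactorial_le_pow D d
  _ ≤ 2 * (D - (m * d - 1)) ^ d := pow_le_two_mul_sub_pow he
  _ ≤ 2 * (m * (q + 1 - d)) ^ d := by gcongr
  _ = 2 * m ^ d * (q + 1 - d) ^ d := by ring
  _ ≤ 2 * m ^ d * q.descFactorial d := by gcongr; exact pow_sub_le_descFactorial q d

lemma choose_le_two_mul_pow_mul_choose_div {m d D : ℕ} (hm : 0 < m) (h : 2 * m * d ^ 2 ≤ D) :
    D.choose d ≤ 2 * m ^ d * (D / m).choose d := by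
  have := descFactorial_le_two_mul_pow_mul_descFactorial_div hm h
  rw [descFactorial_eq_factorial_mul_choose, descFactorial_eq_factorial_mul_choose,
    mul_left_comm] at this
  exact Nat.le_of_mul_le_mul_left this (factorial_pos d)

end Nat

namespace Finset

lemma card_mul_choose_div_le_sum_choose {β : Type*} (s : Finset β) (f : β → ℕ) (k : ℕ) :
    #s * ((∑ v ∈ s, f v) / #s).choose k ≤ ∑ v ∈ s, (f v).choose k := by
  obtain _ | k := k
  · simp
  set q := (∑ v ∈ s, f v) / #s
  have htangent := sum_le_sum fun v (_ : v ∈ s) => Nat.choose_add_mul_choose_le q (f v) k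
  simp only [sum_add_distrib, sum_const, smul_eq_mul, ← sum_mul] at htangent
  have : #s * (q * (q - 1).choose k) ≤ (∑ v ∈ s, f v) * (q - 1).choose k := by
    rw [← mul_assoc, mul_comm #s]
    exact Nat.mul_le_mul_right _ (Nat.div_mul_le_self _ _)
  omega

end Finset

section Domination

variable {ι α : Type*} [Fintype ι] [LinearOrder α]

/-- `y` `d`-dominates `x`. -/
def Dominates (d : ℕ) (y x : ι → α) : Prop :=
  #{i | x i ≠ y i} = d ∧ ∀ i, x i ≤ y i

lemma dominates_of_eqOn_compl {T : Finset ι} {x y : ι → α} {v w : α}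
    (hx : ∀ i ∈ T, x i = v) (hy : ∀ i ∈ T, y i = w) (hxy : ∀ i ∉ T, x i = y i)
    (hvw : v < w) : Dominates #T y x := by
  have hne : ∀ i, x i ≠ y i ↔ i ∈ T := fun i => by
    by_cases hi : i ∈ T
    · simp [hi, hx i hi, hy i hi, hvw.ne]
    · simp [hi, hxy i hi]
  refine ⟨congrArg card (by ext i; simpa using hne i), fun i => ?_⟩
  by_cases hi : i ∈ T
  · rw [hx i hi, hy i hi]; exact hvw.le
  · exact (hxy i hi).le

variable [DecidableEq ι] [Fintype α]

lemma card_filter_constOn_le {𝒞 : Finset (ι → α)} {T : Finset ι}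
    (hfree : ∀ x ∈ 𝒞, ∀ y ∈ 𝒞, ¬ Dominates #T y x) :
    #{x ∈ 𝒞 | ∃ v, ∀ i ∈ T, x i = v} ≤ Fintype.card α ^ (Fintype.card ι - #T) := by
  calc #{x ∈ 𝒞 | ∃ v, ∀ i ∈ T, x i = v}
      ≤ #(univ : Finset ((Tᶜ : Finset ι) → α)) := by
        refine card_le_card_of_injOn (fun x i => x i) (fun _ _ => mem_coe.2 (mem_univ _)) ?_
        rintro x hx y hy hxy
        obtain ⟨hx𝒞, v, hxv⟩ := mem_filter.1 (mem_coe.1 hx)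
        obtain ⟨hy𝒞, w, hyw⟩ := mem_filter.1 (mem_coe.1 hy)
        have hoff : ∀ i ∉ T, x i = y i := fun i hi => congrFun hxy ⟨i, mem_compl.2 hi⟩
        rcases lt_trichotomy v w with hvw | rfl | hwv
        · exact (hfree x hx𝒞 y hy𝒞 (dominates_of_eqOn_compl hxv hyw hoff hvw)).elim
        · funext i
          by_cases hi : i ∈ T
          · rw [hxv i hi, hyw i hi]
          · exact hoff i hi
        · exact (hfree y hy𝒞 x hx𝒞
            (dominates_of_eqOn_compl hyw hxv (fun i hi => (hoff i hi).symm) hwv)).elim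
    _ = Fintype.card α ^ (Fintype.card ι - #T) := by simp

lemma card_mul_choose_le_card_constOn (x : ι → α) {d : ℕ} (hd : d ≠ 0) :
    Fintype.card α * (Fintype.card ι / Fintype.card α).choose d
      ≤ #{T ∈ powersetCard d univ | ∃ v, ∀ i ∈ T, x i = v} := by
  have hfibers : ∑ v, #{i | x i = v} = Fintype.card ι := by
    rw [← card_univ, card_eq_sum_card_fiberwise (fun i _ => mem_univ (x i))]
  have hdisj :
      ((univ : Finset α) : Set α).PairwiseDisjoint fun v => powersetCard d {i | x i = v} := by
    intro v _ w _ hvw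
    refine disjoint_left.2 fun T hTv hTw => ?_
    rw [mem_powersetCard] at hTv hTw
    obtain ⟨i, hi⟩ := card_pos.1 (hTv.2 ▸ Nat.pos_of_ne_zero hd)
    exact hvw ((mem_filter.1 (hTv.1 hi)).2.symm.trans (mem_filter.1 (hTw.1 hi)).2)
  calc Fintype.card α * (Fintype.card ι / Fintype.card α).choose d
      ≤ ∑ v, (#{i | x i = v}).choose d := by
        simpa [hfibers] using card_mul_choose_div_le_sum_choose univ (fun v => #{i | x i = v}) d
    _ = #(univ.biUnion fun v => powersetCard d {i | x i = v}) := by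
        rw [card_biUnion hdisj]; simp
    _ ≤ _ := by
        refine card_le_card fun T hT => ?_
        obtain ⟨v, -, hT⟩ := mem_biUnion.1 hT
        rw [mem_powersetCard] at hT
        exact mem_filter.2 ⟨mem_powersetCard.2 ⟨subset_univ _, hT.2⟩,
          v, fun i hi => (mem_filter.1 (hT.1 hi)).2⟩

theorem card_mul_le_of_forall_not_dominates (𝒞 : Finset (ι → α)) {d : ℕ} (hd : d ≠ 0)
    (hfree : ∀ x ∈ 𝒞, ∀ y ∈ 𝒞, ¬ Dominates d y x) :
    #𝒞 * (Fintype.card α * (Fintype.card ι / Fintype.card α).choose d)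
      ≤ (Fintype.card ι).choose d * Fintype.card α ^ (Fintype.card ι - d) := by
  have hupper : ∀ T ∈ powersetCard d (univ : Finset ι),
      #{x ∈ 𝒞 | ∃ v, ∀ i ∈ T, x i = v} ≤ Fintype.card α ^ (Fintype.card ι - d) := by
    intro T hT
    rw [mem_powersetCard] at hT
    exact hT.2 ▸ card_filter_constOn_le (hT.2 ▸ hfree)
  simpa using card_mul_le_card_mul (fun x T => ∃ v, ∀ i ∈ T, x i = v)
    (fun x _ => card_mul_choose_le_card_constOn x hd) hupper

end Domination

theorem stmt9 (d m D : ℕ) (h : 2*m*d^2 ≤ D) (𝒞 : Finset (Fin D → Fin m))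
    (hfree : ∀ x ∈ 𝒞, ∀ y ∈ 𝒞,
      ¬((Finset.univ.filter fun i => x i ≠ y i).card = d ∧ ∀ i, x i ≤ y i)) :
    𝒞.card ≤ 2 * m^(D-1) := by
  rcases eq_or_ne d 0 with rfl | hd
  · have : 𝒞 = ∅ :=
      eq_empty_of_forall_notMem fun x hx => hfree x hx x hx ⟨by simp, fun _ => le_rfl⟩
    simp [this]
  rcases Nat.eq_zero_or_pos m with rfl | hm
  · calc #𝒞 ≤ 0 ^ D := by simpa using card_le_univ 𝒞
      _ ≤ 2 * 0 ^ (D - 1) := by rcases D with _ | _ | D <;> simp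
  have hdD : d ≤ D := (Nat.le_div_of_two_mul_mul_sq_le hm h).trans (Nat.div_le_self D m)
  have hpos : 0 < m * (D / m).choose d :=
    Nat.mul_pos hm (Nat.choose_pos (Nat.le_div_of_two_mul_mul_sq_le hm h))
  refine Nat.le_of_mul_le_mul_right ?_ hpos
  calc #𝒞 * (m * (D / m).choose d) ≤ D.choose d * m ^ (D - d) := by
        simpa using card_mul_le_of_forall_not_dominates 𝒞 hd hfree
    _ ≤ 2 * m ^ d * (D / m).choose d * m ^ (D - d) := by
        gcongr; exact Nat.choose_le_two_mul_pow_mul_choose_div hm h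
    _ = 2 * (m ^ d * m ^ (D - d)) * (D / m).choose d := by ring
    _ = 2 * (m ^ (D - 1) * m) * (D / m).choose d := by
        rw [← pow_add, ← pow_succ, Nat.add_sub_cancel' hdD, Nat.sub_add_cancel (by omega)]
    _ = 2 * m ^ (D - 1) * (m * (D / m).choose d) := by ring
end

section
/- For m, d, D ∈ ℕ with 2md² ≤ D and nonnegative integers k₁,…,k_m summing to D, we have Σ_{i ∈ [m]} binom(k_i, d) / (m^{D-d} · binom(D,d)) ≥ 1/(2 m^{D-1}). -/
open Finset

open scoped Nat

/-! Put `y i = k i - (d - 1)`. Then `y i ^ d ≤ d! * (k i).choose d`, `∑ y i ≥ D - m (d - 1)`, and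
the power-mean inequality gives `(∑ y i) ^ d ≤ m ^ (d - 1) * ∑ y i ^ d`. Bernoulli's inequality
`D ^ d ≤ 2 (D - x) ^ d` for `2 d x ≤ D` absorbs the loss `x = m (d - 1)`, and `d! * D.choose d ≤ D ^ d`,
so `m * D.choose d ≤ 2 m ^ d ∑ (k i).choose d`, which rearranges to the claim. -/

theorem add_pow_succ_le_pow_succ_add_mul {R : Type*} [CommSemiring R] [PartialOrder R]
    [IsOrderedRing R] {b x : R} (hb : 0 ≤ b) (hx : 0 ≤ x) :
    ∀ n : ℕ, (b + x) ^ (n + 1) ≤ b ^ (n + 1) + (n + 1) * x * (b + x) ^ n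
  | 0 => by simp
  | n + 1 =>
    calc (b + x) ^ (n + 2) = (b + x) * (b + x) ^ (n + 1) := pow_succ' _ _
      _ ≤ (b + x) * (b ^ (n + 1) + (n + 1) * x * (b + x) ^ n) := by
        gcongr; exact add_pow_succ_le_pow_succ_add_mul hb hx n
      _ = b ^ (n + 2) + x * b ^ (n + 1) + (n + 1) * x * (b + x) ^ (n + 1) := by ring
      _ ≤ b ^ (n + 2) + x * (b + x) ^ (n + 1) + (n + 1) * x * (b + x) ^ (n + 1) := by
        gcongr; exact le_add_of_nonneg_right hx
      _ = b ^ (n + 2) + ((n + 1 : ℕ) + 1) * x * (b + x) ^ (n + 1) := by push_cast; ring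

theorem Nat.pow_le_two_mul_sub_pow_s11 {a x n : ℕ} (h : 2 * n * x ≤ a) : a ^ n ≤ 2 * (a - x) ^ n := by
  cases n with
  | zero => simp
  | succ n =>
    have hxa : x ≤ a := by nlinarith
    have hbern := add_pow_succ_le_pow_succ_add_mul (a - x).zero_le x.zero_le n
    rw [Nat.sub_add_cancel hxa] at hbern
    have hhalf : 2 * ((n + 1) * x * a ^ n) ≤ a ^ (n + 1) := by
      rw [pow_succ, ← mul_assoc, ← mul_assoc, mul_comm _ a]; gcongr
    push_cast at hbern
    omega

theorem Nat.card_mul_choose_sum_le {ι : Type*} (s : Finset ι) (k : ι → ℕ) (d : ℕ)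
    (h : 2 * #s * d ^ 2 ≤ ∑ i ∈ s, k i) :
    #s * (∑ i ∈ s, k i).choose d ≤ 2 * #s ^ d * ∑ i ∈ s, (k i).choose d := by
  cases d with
  | zero => simp; omega
  | succ n =>
    set D := ∑ i ∈ s, k i
    set m := #s
    have hsum : D ≤ ∑ i ∈ s, (k i - n) + m * n := by
      rw [← smul_eq_mul, ← sum_const, ← sum_add_distrib]
      exact sum_le_sum fun i _ => by omega
    have pow_le_factorial_mul_choose :
        ∀ k : ℕ, (k - n) ^ (n + 1) ≤ (n + 1)! * k.choose (n + 1) := fun k => by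
      rw [← Nat.descFactorial_eq_factorial_mul_choose]
      simpa using Nat.pow_sub_le_descFactorial k (n + 1)
    refine Nat.le_of_mul_le_mul_left ?_ (n + 1).factorial_pos
    calc (n + 1)! * (m * D.choose (n + 1)) = m * D.descFactorial (n + 1) := by
          rw [Nat.descFactorial_eq_factorial_mul_choose]; ring
      _ ≤ m * D ^ (n + 1) := by gcongr; exact Nat.descFactorial_le_pow _ _
      _ ≤ m * (2 * (D - m * n) ^ (n + 1)) := by
          gcongr; apply Nat.pow_le_two_mul_sub_pow_s11; nlinarith
      _ ≤ m * (2 * (∑ i ∈ s, (k i - n)) ^ (n + 1)) := by gcongr; omega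
      _ ≤ m * (2 * (m ^ n * ∑ i ∈ s, (k i - n) ^ (n + 1))) := by
          gcongr; exact pow_sum_le_card_mul_sum_pow (fun _ _ => Nat.zero_le _) n
      _ ≤ m * (2 * (m ^ n * ∑ i ∈ s, (n + 1)! * (k i).choose (n + 1))) := by
          gcongr with i; exact pow_le_factorial_mul_choose _
      _ = (n + 1)! * (2 * m ^ (n + 1) * ∑ i ∈ s, (k i).choose (n + 1)) := by
          rw [← mul_sum]; ring

theorem stmt11 (m d D : ℕ) (hm : 0 < m) (h : 2*m*d^2 ≤ D)
    (k : Fin m → ℕ) (hk : ∑ i, k i = D) :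
    (1 : ℝ) / (2 * (m : ℝ)^(D-1)) ≤
      (∑ i : Fin m, (((k i).choose d : ℕ) : ℝ)) /
        ((m : ℝ)^(D-d) * (D.choose d : ℝ)) := by
  set S := ∑ i : Fin m, (k i).choose d
  have hdD : d ≤ D := by nlinarith [Nat.le_self_pow two_ne_zero d]
  have key : m * D.choose d ≤ 2 * m ^ d * S := by
    simpa [hk] using Nat.card_mul_choose_sum_le univ k d (by simpa [hk] using h)
  have hmD : m ^ D ≤ m * m ^ (D - 1) := by
    rw [← pow_succ']; exact Nat.pow_le_pow_right hm (by omega)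
  have hnat : m ^ (D - d) * D.choose d ≤ 2 * m ^ (D - 1) * S := by
    refine Nat.le_of_mul_le_mul_left ?_ hm
    calc m * (m ^ (D - d) * D.choose d) = m ^ (D - d) * (m * D.choose d) := by ring
      _ ≤ m ^ (D - d) * (2 * m ^ d * S) := by gcongr
      _ = 2 * (m ^ (D - d) * m ^ d) * S := by ring
      _ = 2 * m ^ D * S := by rw [← pow_add, Nat.sub_add_cancel hdD]
      _ ≤ 2 * (m * m ^ (D - 1)) * S := by gcongr
      _ = m * (2 * m ^ (D - 1) * S) := by ring
  have hC : 0 < D.choose d := Nat.choose_pos hdD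
  rw [div_le_div_iff₀ (by positivity) (by positivity), one_mul, mul_comm _ (2 * _)]
  exact_mod_cast hnat
end

section
/- For each d ≥ 1 there exists an IP(d)-free family 𝒜 ⊆ binom([n], n/2) with |𝒜| ≥ (1/(nd))·binom(n, n/2) (n even). -/
open Finset

/-! If `A, B ⊆ [n]` form `IP(d)`, then `A \ B` and `B \ A` both have `d` elements and every
element of `A \ B` lies below every element of `B \ A`. Hence
`S(B) - S(A) = S(B \ A) - S(A \ B)` is positive, and it is less than `nd` because
`S(B \ A) ≤ dn` while `S(A \ B) ≥ d`. So two members of one residue class of `S` modulo `nd`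
never form `IP(d)`, and the `nd` classes partition `binom([n], n/2)`. -/

lemma Finset.card_eq_card_filter_of_orderIsoOfFin {α : Type*} [LinearOrder α] {t : ℕ}
    {s C : Finset α} (hC : C ⊆ s) (hs : #s = t) {Q : Fin t → Prop} [DecidablePred Q]
    (hQ : ∀ i, (s.orderIsoOfFin hs i : α) ∈ C ↔ Q i) :
    #C = #{i | Q i} := by
  symm
  refine card_bij (fun i _ => (s.orderIsoOfFin hs i : α))
    (fun i hi => (hQ i).2 (mem_filter.1 hi).2)
    (fun i _ j _ hij => (s.orderIsoOfFin hs).injective (Subtype.ext hij)) fun x hx => ?_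
  refine ⟨(s.orderIsoOfFin hs).symm ⟨x, hC hx⟩,
    mem_filter.2 ⟨mem_univ _, (hQ _).1 ?_⟩, ?_⟩ <;> simp [hx]

lemma Finset.sum_lt_sum_of_card_eq_of_forall_lt {α : Type*} [AddCommMonoid α] [LinearOrder α]
    [IsOrderedCancelAddMonoid α] {s t : Finset α} (hst : #s = #t) (hs : s.Nonempty)
    (h : ∀ a ∈ s, ∀ b ∈ t, a < b) :
    ∑ a ∈ s, a < ∑ b ∈ t, b := by
  have ht : t.Nonempty := card_pos.1 (hst ▸ hs.card_pos)
  calc ∑ a ∈ s, a < ∑ _a ∈ s, t.min' ht :=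
        sum_lt_sum_of_nonempty hs fun a ha => h a ha _ (t.min'_mem ht)
    _ = #t • t.min' ht := by rw [sum_const, hst]
    _ ≤ ∑ b ∈ t, b := card_nsmul_le_sum _ _ _ fun b hb => t.min'_le b hb

namespace FormsPattern

variable {t : ℕ} {A B : Finset ℕ} {P : Fin t → Bool}

lemma card_sdiff_left (h : FormsPattern A B P) : #(A \ B) = #{i | P i = true} := by
  obtain ⟨hs, hP⟩ := h
  exact card_eq_card_filter_of_orderIsoOfFin
    (fun x hx => mem_symmDiff.2 (Or.inl (mem_sdiff.1 hx))) hs fun i => (hP i).symm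

lemma card_sdiff_right (h : FormsPattern A B P) : #(B \ A) = #{i | P i = false} := by
  obtain ⟨hs, hP⟩ := h
  refine card_eq_card_filter_of_orderIsoOfFin
    (fun x hx => mem_symmDiff.2 (Or.inr (mem_sdiff.1 hx))) hs fun i => ?_
  have hi := mem_symmDiff.1 ((symmDiff A B).orderIsoOfFin hs i).2
  rw [Bool.eq_false_iff, ne_eq, hP i]
  grind

variable {d : ℕ}

lemma card_sdiff_left_IP (h : FormsPattern A B (IP d)) : #(A \ B) = d := by
  simp only [h.card_sdiff_left, IP, decide_eq_true_eq, Fin.card_filter_val_lt]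
  omega

lemma card_sdiff_right_IP (h : FormsPattern A B (IP d)) : #(B \ A) = d := by
  have := card_filter_add_card_filter_not (s := (univ : Finset (Fin (2 * d)))) (· < d)
  simp only [Fin.card_filter_val_lt, card_univ, Fintype.card_fin] at this
  simp only [h.card_sdiff_right, IP, decide_eq_false_iff_not]
  omega

lemma lt_of_mem_sdiff_IP (h : FormsPattern A B (IP d)) {a b : ℕ} (ha : a ∈ A \ B)
    (hb : b ∈ B \ A) : a < b := by
  obtain ⟨hs, hP⟩ := h
  set e := (symmDiff A B).orderIsoOfFin hs
  have hmem {x : ℕ} (hx : x ∈ A \ B ∨ x ∈ B \ A) : x ∈ symmDiff A B := by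
    simp only [mem_sdiff] at hx; exact mem_symmDiff.2 hx
  obtain ⟨i, rfl⟩ : ∃ i, (e i : ℕ) = a := ⟨e.symm ⟨a, hmem (.inl ha)⟩, by simp⟩
  obtain ⟨j, rfl⟩ : ∃ j, (e j : ℕ) = b := ⟨e.symm ⟨b, hmem (.inr hb)⟩, by simp⟩
  have hi : (i : ℕ) < d := by simpa [IP] using (hP i).2 ha
  have hj : ¬ (j : ℕ) < d := fun hj =>
    (mem_sdiff.1 hb).2 (mem_sdiff.1 ((hP j).1 (by simpa [IP] using hj))).1
  exact e.strictMono (Fin.lt_def.2 (by omega))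

lemma sum_sdiff_lt_sum_sdiff_IP (hd : 1 ≤ d) (h : FormsPattern A B (IP d)) :
    ∑ i ∈ A \ B, i < ∑ i ∈ B \ A, i :=
  sum_lt_sum_of_card_eq_of_forall_lt (h.card_sdiff_left_IP.trans h.card_sdiff_right_IP.symm)
    (card_pos.1 (h.card_sdiff_left_IP ▸ hd)) fun _ ha _ hb => h.lt_of_mem_sdiff_IP ha hb

lemma sum_sdiff_lt_sum_sdiff_add_IP {n : ℕ} (hd : 1 ≤ d) (hA : A ⊆ Icc 1 n)
    (hB : B ⊆ Icc 1 n) (h : FormsPattern A B (IP d)) :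
    ∑ i ∈ B \ A, i < ∑ i ∈ A \ B, i + n * d := by
  have hupper : ∑ i ∈ B \ A, i ≤ #(B \ A) • n :=
    sum_le_card_nsmul _ _ _ fun i hi => (mem_Icc.1 (hB (mem_sdiff.1 hi).1)).2
  have hlower : #(A \ B) • 1 ≤ ∑ i ∈ A \ B, i :=
    card_nsmul_le_sum _ _ _ fun i hi => (mem_Icc.1 (hA (mem_sdiff.1 hi).1)).1
  rw [h.card_sdiff_right_IP, smul_eq_mul] at hupper
  rw [h.card_sdiff_left_IP, smul_eq_mul] at hlower
  nlinarith

end FormsPattern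

def sumResidueClass (𝒮 : Finset (Finset ℕ)) (m r : ℕ) : Finset (Finset ℕ) :=
  {A ∈ 𝒮 | (∑ i ∈ A, i) % m = r}

theorem pFree_IP_sumResidueClass {n d : ℕ} (hd : 1 ≤ d) {𝒮 : Finset (Finset ℕ)}
    (h𝒮 : ∀ A ∈ 𝒮, A ⊆ Icc 1 n) (r : ℕ) :
    PFree (sumResidueClass 𝒮 (n * d) r) (IP d) := by
  intro A hA B hB hAB
  simp only [sumResidueClass, mem_filter] at hA hB
  have hmod : ∑ i ∈ A, i ≡ ∑ i ∈ B, i [MOD n * d] := hA.2.trans hB.2.symm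
  have hdvd := Nat.modEq_iff_dvd.1 hmod
  rw [Nat.cast_sum, Nat.cast_sum, ← sum_sdiff_sub_sum_sdiff, ← Nat.cast_sum, ← Nat.cast_sum]
    at hdvd
  have hpos := hAB.sum_sdiff_lt_sum_sdiff_IP hd
  have hlt := hAB.sum_sdiff_lt_sum_sdiff_add_IP hd (h𝒮 A hA.1) (h𝒮 B hB.1)
  have := Int.eq_zero_of_dvd_of_nonneg_of_lt (by omega) (by omega) hdvd
  omega

theorem exists_le_card_sumResidueClass (𝒮 : Finset (Finset ℕ)) {m : ℕ} (hm : 0 < m) :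
    ∃ r, (#𝒮 : ℝ) / m ≤ #(sumResidueClass 𝒮 m r) := by
  obtain ⟨r, -, hr⟩ := exists_le_card_fiber_of_nsmul_le_card_of_maps_to
    (f := fun A => (∑ i ∈ A, i) % m) (fun A _ => mem_range.2 (Nat.mod_lt _ hm))
    (nonempty_range_iff.2 hm.ne') (b := (#𝒮 : ℝ) / m)
    (by rw [card_range, nsmul_eq_mul, mul_div_cancel₀ _ (by positivity)])
  exact ⟨r, hr⟩

theorem stmt13_general (n d : ℕ) (hd : 1 ≤ d) :
    ∃ 𝒜 : Finset (Finset ℕ), 𝒜 ⊆ (Finset.Icc 1 n).powersetCard (n/2) ∧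
      PFree 𝒜 (IP d) ∧
      ((n.choose (n/2) : ℝ)) / ((n : ℝ) * d) ≤ (𝒜.card : ℝ) := by
  rcases Nat.eq_zero_or_pos n with rfl | hn
  · exact ⟨∅, by simp, fun A hA => by simp at hA, by simp⟩
  set 𝒮 := (Icc 1 n).powersetCard (n / 2)
  have h𝒮 : #𝒮 = n.choose (n / 2) := by simp [𝒮]
  obtain ⟨r, hr⟩ := exists_le_card_sumResidueClass 𝒮 (Nat.mul_pos hn hd)
  refine ⟨sumResidueClass 𝒮 (n * d) r, filter_subset _ _,
    pFree_IP_sumResidueClass hd (fun A hA => (mem_powersetCard.1 hA).1) r, ?_⟩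
  simpa [h𝒮] using hr

theorem stmt13 (n d : ℕ) (hn : 2 ∣ n) (hd : 1 ≤ d) :
    ∃ 𝒜 : Finset (Finset ℕ), 𝒜 ⊆ (Finset.Icc 1 n).powersetCard (n/2) ∧
      PFree 𝒜 (IP d) ∧
      ((n.choose (n/2) : ℝ)) / ((n : ℝ) * d) ≤ (𝒜.card : ℝ) :=
  stmt13_general n d hd
end

section
/- Let d ∈ ℕ. For A, B ⊆ [n], if pat(A,B) = IP(d) then there exists i ∈ [n] such that |A ∩ [i]| ≥ |B ∩ [i]| + d. Consequently, the family 𝒜 = {A ∈ binom([n], n/2) : | |A ∩ [i]| − i/2 | < d/4 for all i ∈ [n]} is IP(d)-free (for d ≥ 1). -/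
open Finset
open scoped Classical

/-!
Write `A △ B = {j₁ < ⋯ < j_{2d}}`. For the pattern `IP(d)` the elements of `A \ B` are exactly
`j₁, …, j_d`, so cutting at `i = j_d` puts all `d` of them, and nothing of `B \ A`, into `[i]`;
hence `|A ∩ [i]| = |B ∩ [i]| + d`. Two sets both within `d/4` of `i/2` on every prefix `[i]`
can differ by less than `d/2` there, so they cannot form `IP(d)`.
-/

lemma Finset.card_inter_eq_card_inter_add_card_sdiff {α : Type*} [DecidableEq α]
    {A B S : Finset α} (hAB : A \ B ⊆ S) (hBA : Disjoint (B \ A) S) :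
    #(A ∩ S) = #(B ∩ S) + #(A \ B) := by
  have hinter : A ∩ S ∩ B = B ∩ S := by
    ext x
    have : x ∈ B \ A → x ∉ S := fun hx => disjoint_left.1 hBA hx
    simp only [mem_inter, mem_sdiff] at this ⊢
    tauto
  have hsdiff : (A ∩ S) \ B = A \ B := by
    ext x
    have : x ∈ A \ B → x ∈ S := fun hx => hAB hx
    simp only [mem_inter, mem_sdiff] at this ⊢
    tauto
  rw [← card_inter_add_card_sdiff (A ∩ S) B, hinter, hsdiff]

lemma Finset.exists_orderEmbOfFin_eq {α : Type*} [LinearOrder α] {s : Finset α} {k : ℕ}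
    (h : #s = k) {x : α} (hx : x ∈ s) : ∃ i, s.orderEmbOfFin h i = x := by
  rwa [← mem_coe, ← range_orderEmbOfFin s h] at hx

namespace FormsPattern

variable {A B : Finset ℕ}

theorem card_sdiff {t : ℕ} {P : Fin t → Bool} (h : FormsPattern A B P) :
    #(A \ B) = #{i | P i = true} := by
  obtain ⟨hcard, hP⟩ := h
  simp only [coe_orderIsoOfFin_apply] at hP
  refine (card_bij (fun i _ => (symmDiff A B).orderEmbOfFin hcard i)
    (fun i hi => (hP i).1 (mem_filter.1 hi).2) (fun i _ i' _ hi => (orderEmbOfFin _ _).injective hi)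
    fun x hx => ?_).symm
  obtain ⟨i, rfl⟩ := exists_orderEmbOfFin_eq hcard (mem_symmDiff.2 (Or.inl (mem_sdiff.1 hx)))
  exact ⟨i, mem_filter.2 ⟨mem_univ i, (hP i).2 hx⟩, rfl⟩

theorem exists_sdiff_le_lt_of_IP {d : ℕ} (hd : 0 < d) (h : FormsPattern A B (IP d)) :
    ∃ j ∈ A \ B, (∀ x ∈ A \ B, x ≤ j) ∧ ∀ x ∈ B \ A, j < x := by
  obtain ⟨hcard, hP⟩ := h
  set e := (symmDiff A B).orderEmbOfFin hcard
  let m : Fin (2 * d) := ⟨d - 1, by omega⟩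
  have hmem : ∀ i, e i ∈ A \ B ↔ i ≤ m := fun i => by
    rw [← coe_orderIsoOfFin_apply, ← hP i, IP, decide_eq_true_iff, Fin.le_def]
    change _ ↔ (i : ℕ) ≤ d - 1
    omega
  refine ⟨e m, (hmem m).2 le_rfl, fun x hx => ?_, fun x hx => ?_⟩
  · obtain ⟨i, rfl⟩ := exists_orderEmbOfFin_eq hcard (mem_symmDiff.2 (Or.inl (mem_sdiff.1 hx)))
    exact e.le_iff_le.2 ((hmem i).1 hx)
  · obtain ⟨i, rfl⟩ := exists_orderEmbOfFin_eq hcard (mem_symmDiff.2 (Or.inr (mem_sdiff.1 hx)))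
    refine e.lt_iff_lt.2 (lt_of_not_ge fun hi => ?_)
    exact (mem_sdiff.1 hx).2 (mem_sdiff.1 ((hmem i).2 hi)).1

theorem exists_card_inter_Icc_eq_add_of_IP {n d : ℕ} (hd : 0 < d) (hA : A ⊆ Icc 1 n)
    (h : FormsPattern A B (IP d)) :
    ∃ i ∈ Icc 1 n, #(A ∩ Icc 1 i) = #(B ∩ Icc 1 i) + d := by
  obtain ⟨j, hj, hle, hlt⟩ := h.exists_sdiff_le_lt_of_IP hd
  refine ⟨j, hA (mem_sdiff.1 hj).1, ?_⟩
  have hAB : A \ B ⊆ Icc 1 j := fun x hx =>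
    mem_Icc.2 ⟨(mem_Icc.1 (hA (mem_sdiff.1 hx).1)).1, hle x hx⟩
  have hBA : Disjoint (B \ A) (Icc 1 j) :=
    disjoint_left.2 fun x hx hxj => (hlt x hx).not_ge (mem_Icc.1 hxj).2
  rw [card_inter_eq_card_inter_add_card_sdiff hAB hBA, h.card_sdiff]
  simp only [IP, decide_eq_true_eq, Fin.card_filter_val_lt]
  omega

end FormsPattern

theorem stmt15 (n d : ℕ) (hd : 1 ≤ d) :
    (∀ A B : Finset ℕ, A ⊆ Finset.Icc 1 n → B ⊆ Finset.Icc 1 n →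
      FormsPattern A B (IP d) →
      ∃ i ∈ Finset.Icc 1 n, (B ∩ Finset.Icc 1 i).card + d ≤ (A ∩ Finset.Icc 1 i).card) ∧
    PFree (((Finset.Icc 1 n).powersetCard (n/2)).filter
      (fun A => ∀ i ∈ Finset.Icc 1 n,
        |((A ∩ Finset.Icc 1 i).card : ℝ) - (i : ℝ)/2| < (d : ℝ)/4)) (IP d) := by
  refine ⟨fun A B hA _ h => ?_, fun A hA B hB h => ?_⟩
  · obtain ⟨i, hi, hcard⟩ := h.exists_card_inter_Icc_eq_add_of_IP hd hA
    exact ⟨i, hi, hcard.ge⟩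
  simp only [mem_filter, mem_powersetCard] at hA hB
  obtain ⟨i, hi, hcard⟩ := h.exists_card_inter_Icc_eq_add_of_IP hd hA.1.1
  have hA' := abs_lt.1 (hA.2 i hi)
  have hB' := abs_lt.1 (hB.2 i hi)
  have hcard' : (#(A ∩ Icc 1 i) : ℝ) = #(B ∩ Icc 1 i) + d := by exact_mod_cast hcard
  linarith [hA'.2, hB'.1, (Nat.cast_nonneg d : (0 : ℝ) ≤ d)]
end
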